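/- Let D be a rooted digraph with root r, and let v ≠ r be a vertex with rv not an edge of D. Suppose I is a subset of the ingoing edges of v such that there is an internally disjoint (r,v)-path-system whose set of terminal edges equals I, and suppose S is an Erdős–Menger (r,v)-separation in D. Then there exists an (r,v)-path-system R orthogonal to S (hence an Erdős–Menger path-system) whose set of terminal edges contains I. -/

import Mathlib

/-!  Common framework: digraphs as edge sets on a vertex type, directed paths,
path-systems, separations, flames and largeness. -/

universe u

variable {V : Type u}

/-- A directed path in the digraph on `V` with edge set `E`, given by its
(nonempty, repetition-free) list of vertices `start :: rest`. -/
structure Dipath (E : Set (V × V)) : Type u where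
  start : V
  rest : List V
  chain : List.Chain (fun a b => (a, b) ∈ E) start rest
  nodup : (start :: rest).Nodup

namespace Dipath

variable {E : Set (V × V)}

/-- The list of vertices of the path. -/
def verts (p : Dipath E) : List V := p.start :: p.rest

/-- The terminal vertex of the path. -/
def last (p : Dipath E) : V := (p.start :: p.rest).getLast (List.cons_ne_nil _ _)

/-- The set of vertices of the path. -/
def support (p : Dipath E) : Set V := {v | v ∈ p.verts}

/-- The internal vertices of the path (all vertices except the first and the last). -/
def internal (p : Dipath E) : Set V := {v | v ∈ p.rest.dropLast}

/-- The list of (directed) edges of the path. -/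
def edges (p : Dipath E) : List (V × V) := p.verts.zip p.rest

/-- The set of edges of the path. -/
def edgeSet (p : Dipath E) : Set (V × V) := {e | e ∈ p.edges}

/-- The last edge of the path, if the path has at least one edge. -/
def lastEdge? (p : Dipath E) : Option (V × V) := p.edges.getLast?

end Dipath

section Defs

variable (E : Set (V × V))

/-- The set of ingoing edges of `v`. -/
def inEdges (v : V) : Set (V × V) := {e ∈ E | e.2 = v}

/-- The set of initial vertices of a set of paths. -/
def initVerts {E : Set (V × V)} (P : Set (Dipath E)) : Set V := Dipath.start '' P

/-- The set of terminal vertices of a set of paths. -/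
def termVerts {E : Set (V × V)} (P : Set (Dipath E)) : Set V := Dipath.last '' P

/-- The set of terminal edges of a set of paths. -/
def termEdges {E : Set (V × V)} (P : Set (Dipath E)) : Set (V × V) :=
  {e | ∃ p ∈ P, p.lastEdge? = some e}

/-- An `(r,v)`-path-system: a set of pairwise internally disjoint directed
paths from `r` to `v`. -/
def IsRVSystem (r v : V) (P : Set (Dipath E)) : Prop :=
  (∀ p ∈ P, p.start = r ∧ p.last = v) ∧
    P.Pairwise fun p q => p.support ∩ q.support ⊆ {r, v}

/-- An `(r,v)`-separation: a set of vertices avoiding `r` and `v` and meeting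
every directed path from `r` to `v`. -/
def IsSeparation (r v : V) (S : Set V) : Prop :=
  r ∉ S ∧ v ∉ S ∧ ∀ p : Dipath E, p.start = r → p.last = v → (p.support ∩ S).Nonempty

/-- A set of paths `P` and a vertex set `S` are orthogonal:  every path of `P`
meets `S` in exactly one vertex and every vertex of `S` lies on a path of `P`. -/
def Orthogonal {E : Set (V × V)} (P : Set (Dipath E)) (S : Set V) : Prop :=
  (∀ p ∈ P, ∃! x, x ∈ p.support ∩ S) ∧ ∀ x ∈ S, ∃ p ∈ P, x ∈ p.support

/-- An Erdős–Menger `(r,v)`-path-system: one orthogonal to some `(r,v)`-separation. -/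
def IsEMSystem (r v : V) (P : Set (Dipath E)) : Prop :=
  IsRVSystem E r v P ∧ ∃ S, IsSeparation E r v S ∧ Orthogonal P S

/-- An Erdős–Menger `(r,v)`-separation: one orthogonal to some `(r,v)`-path-system. -/
def IsEMSeparation (r v : V) (S : Set V) : Prop :=
  IsSeparation E r v S ∧ ∃ P : Set (Dipath E), IsRVSystem E r v P ∧ Orthogonal P S

/-- `𝒢_E(v)` (with root `r`): the collection of edge sets `I` that arise as the set of
terminal edges of an internally disjoint `(r,v)`-path-system in `E`. -/
def GSet (r v : V) : Set (Set (V × V)) :=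
  {I | ∃ P : Set (Dipath E), IsRVSystem E r v P ∧ termEdges P = I}

/-- A vertex-flame (with root `r`): for every `v ≠ r`, the whole in-edge set of `v`
is the terminal edge set of an internally disjoint `(r,v)`-path-system. -/
def IsFlame (r : V) : Prop := ∀ v, v ≠ r → inEdges E v ∈ GSet E r v

/-- `L` is `v`-large with respect to the digraph `E` rooted at `r`: `L` contains `rv`
whenever `E` does, and some Erdős–Menger `(r,v)`-path-system of `E - rv` lies in `L`. -/
def VLarge (r : V) (L : Set (V × V)) (v : V) : Prop :=
  ((r, v) ∈ E → (r, v) ∈ L) ∧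
    ∃ P : Set (Dipath (E \ {(r, v)})),
      IsEMSystem (E \ {(r, v)}) r v P ∧ ∀ p ∈ P, p.edgeSet ⊆ L

/-- `L` is large with respect to the digraph `E` rooted at `r`. -/
def Large (r : V) (L : Set (V × V)) : Prop := ∀ v, v ≠ r → VLarge E r L v

/-- An `(X,Y)`-path: from `X` to `Y`, internally disjoint from `X ∪ Y`. -/
def IsXYPath (X Y : Set V) (p : Dipath E) : Prop :=
  p.start ∈ X ∧ p.last ∈ Y ∧ ∀ w ∈ p.internal, w ∉ X ∪ Y

/-- An `(X,Y)`-path-system: pairwise disjoint `(X,Y)`-paths. -/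
def IsXYSystem (X Y : Set V) (P : Set (Dipath E)) : Prop :=
  (∀ p ∈ P, IsXYPath E X Y p) ∧ P.Pairwise fun p q => Disjoint p.support q.support

/-- `X` is joinable to `Y`: some `(X,Y)`-path-system covers `X` with its initial vertices. -/
def Joinable (X Y : Set V) : Prop :=
  ∃ P : Set (Dipath E), IsXYSystem E X Y P ∧ initVerts P = X

/-- `X` is incompressible to `Y`: `X` is joinable to `Y` and every witnessing
path-system covers `Y` with its terminal vertices. -/
def Incompressible (X Y : Set V) : Prop :=
  Joinable E X Y ∧
    ∀ P : Set (Dipath E), IsXYSystem E X Y P → initVerts P = X → termVerts P = Y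

/-- An `(X,Y)`-separation: a vertex set meeting every `(X,Y)`-path. -/
def IsXYSeparation (X Y : Set V) (S : Set V) : Prop :=
  ∀ p : Dipath E, IsXYPath E X Y p → (p.support ∩ S).Nonempty

/-- An Erdős–Menger `(X,Y)`-separation: one orthogonal to some `(X,Y)`-path-system. -/
def IsEMXYSeparation (X Y : Set V) (S : Set V) : Prop :=
  IsXYSeparation E X Y S ∧ ∃ P : Set (Dipath E), IsXYSystem E X Y P ∧ Orthogonal P S

/-- `X'` is `(X,Y)`-finitely extendable: every `O` with `X' ⊆ O ⊆ X` and `O \ X'`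
finite is joinable to `Y`. -/
def FinExtendable (X Y X' : Set V) : Prop :=
  X' ⊆ X ∧ ∀ O, X' ⊆ O → O ⊆ X → (O \ X').Finite → Joinable E O Y

/-- `S` separates the vertex `y` from `r`:  every directed path from `r` to `y` meets `S`. -/
def SeparatesFrom (r : V) (S : Set V) (y : V) : Prop :=
  ∀ p : Dipath E, p.start = r → p.last = y → (p.support ∩ S).Nonempty

/-- An `(X,y)`-path: from a vertex of `X` to `y`, internally disjoint from `X`. -/
def IsXyPath (X : Set V) (y : V) (p : Dipath E) : Prop :=
  p.start ∈ X ∧ p.last = y ∧ ∀ w ∈ p.internal, w ∉ X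

/-- An `(X,y)`-path-system: `(X,y)`-paths, pairwise disjoint except possibly at `y`. -/
def IsXySystem (X : Set V) (y : V) (P : Set (Dipath E)) : Prop :=
  (∀ p ∈ P, IsXyPath E X y p) ∧ P.Pairwise fun p q => p.support ∩ q.support ⊆ {y}

/-- An `(r,S)`-path: from `r` to a vertex of `S`, internally disjoint from `S`. -/
def IsRSPath (r : V) (S : Set V) (p : Dipath E) : Prop :=
  p.start = r ∧ p.last ∈ S ∧ ∀ w ∈ p.internal, w ∉ S

/-- An `(r,S)`-path-system: `(r,S)`-paths, pairwise disjoint apart from `r`. -/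
def IsRSSystem (r : V) (S : Set V) (P : Set (Dipath E)) : Prop :=
  (∀ p ∈ P, IsRSPath E r S p) ∧ P.Pairwise fun p q => p.support ∩ q.support ⊆ {r}

/-- `E` is a `G`-quasi-flame (with root `r`): for every `v ≠ r`, every set `I` of
ingoing edges of `v` with `I \ inEdges G v` finite lies in `𝒢_E(v)`. -/
def QuasiFlame (r : V) (G : Set (V × V)) : Prop :=
  ∀ v, v ≠ r → ∀ I, I ⊆ inEdges E v → (I \ inEdges G v).Finite → I ∈ GSet E r v

/-- The local connectivity `κ_E(r,v)`: the maximum size of an internally disjoint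
`(r,v)`-path-system. -/
noncomputable def kappa (r v : V) : ℕ :=
  sSup {n | ∃ P : Set (Dipath E), IsRVSystem E r v P ∧ P.Finite ∧ P.ncard = n}

end Defs

/-!
Let `P` be the path-system with terminal edges `I` and `Q` one orthogonal to `S`. Every path
from `r` to `v` splits at its last `S`-vertex into an initial part and an `S`-free final
segment, and for a `Q`-path the initial part is `S`-free as well. The initial part of a `Q`-path
never meets the final segment of a `P`-path: together they would give an `S`-free walk from `r`
to `v`.

The final segment of a `Q`-path is used up to its first vertex on a tail, and the tail of a
`P`-path is its final segment from its last used vertex on. These two conditions refer to each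
other, so the set of used vertices is taken to be a least fixed point. The last used vertex on
a `P`-path `p` (its switch vertex) is the first tail vertex on the final segment of exactly one
`Q`-path, the feeder of `p`. Following the feeder up to the switch vertex and then `p` gives a
path that ends with the last edge of `p`. These rerouted paths, together with the `Q`-paths
that avoid all tails, form the required path-system.
-/

open Classical in
noncomputable def List.takeThrough {α : Type*} (F : Set α) : List α → List α
  | [] => []
  | a :: l => if a ∈ F then [a] else a :: takeThrough F l

namespace List

variable {α : Type*} {F F' : Set α} {R : α → α → Prop} {l l₁ l₂ : List α} {a c x y : α}

theorem takeThrough_cons_of_mem (h : a ∈ F) : takeThrough F (a :: l) = [a] := by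
  simp [takeThrough, h]

theorem takeThrough_cons_of_notMem (h : a ∉ F) :
    takeThrough F (a :: l) = a :: takeThrough F l := by
  simp [takeThrough, h]

theorem takeThrough_append_cons (h₁ : ∀ y ∈ l₁, y ∉ F) (hc : c ∈ F) :
    takeThrough F (l₁ ++ c :: l₂) = l₁ ++ [c] := by
  induction l₁ with
  | nil => exact takeThrough_cons_of_mem hc
  | cons a l₁ ih =>
    rw [cons_append, takeThrough_cons_of_notMem (h₁ a mem_cons_self),
      ih fun y hy => h₁ y (mem_cons_of_mem a hy), cons_append]

theorem takeThrough_prefix (F : Set α) : ∀ l : List α, takeThrough F l <+: l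
  | [] => prefix_rfl
  | a :: l => by
    by_cases h : a ∈ F
    · rw [takeThrough_cons_of_mem h]
      exact ⟨l, rfl⟩
    · rw [takeThrough_cons_of_notMem h]
      exact cons_prefix_cons.mpr ⟨rfl, takeThrough_prefix F l⟩

theorem mem_of_mem_takeThrough (h : y ∈ takeThrough F l) : y ∈ l :=
  (takeThrough_prefix F l).subset h

theorem takeThrough_prefix_of_subset (h : F ⊆ F') :
    ∀ l : List α, takeThrough F' l <+: takeThrough F l
  | [] => prefix_rfl
  | a :: l => by
    by_cases ha : a ∈ F
    · rw [takeThrough_cons_of_mem ha, takeThrough_cons_of_mem (h ha)]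
    · rw [takeThrough_cons_of_notMem ha]
      by_cases ha' : a ∈ F'
      · rw [takeThrough_cons_of_mem ha']
        exact ⟨takeThrough F l, rfl⟩
      · rw [takeThrough_cons_of_notMem ha']
        exact cons_prefix_cons.mpr ⟨rfl, takeThrough_prefix_of_subset h l⟩

theorem head_mem_takeThrough : a ∈ takeThrough F (a :: l) := by
  by_cases h : a ∈ F <;> simp [takeThrough, h]

theorem exists_eq_append_cons_of_mem_takeThrough (hy : y ∈ takeThrough F l) (hyF : y ∈ F) :
    ∃ l₁ l₂, l = l₁ ++ y :: l₂ ∧ ∀ z ∈ l₁, z ∉ F := by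
  induction l with
  | nil => exact absurd hy (not_mem_nil (a := y))
  | cons a l ih =>
    by_cases ha : a ∈ F
    · rw [takeThrough_cons_of_mem ha, mem_singleton] at hy
      exact ⟨[], l, by rw [hy]; rfl, by simp⟩
    · rw [takeThrough_cons_of_notMem ha, mem_cons] at hy
      rcases hy with rfl | hy
      · exact absurd hyF ha
      obtain ⟨l₁, l₂, rfl, h₁⟩ := ih hy
      exact ⟨a :: l₁, l₂, rfl, by simpa [ha] using h₁⟩

theorem eq_of_mem_takeThrough (hy : y ∈ takeThrough F l) (hyF : y ∈ F)
    (hc : c ∈ takeThrough F l) (hcF : c ∈ F) : y = c := by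
  obtain ⟨l₁, l₂, rfl, h₁⟩ := exists_eq_append_cons_of_mem_takeThrough hy hyF
  rw [takeThrough_append_cons h₁ hyF, mem_append, mem_singleton] at hc
  exact (hc.resolve_left fun h => h₁ c h hcF).symm

theorem exists_mem_takeThrough (h : ∃ y ∈ l, y ∈ F) : ∃ c ∈ takeThrough F l, c ∈ F := by
  induction l with
  | nil => simp at h
  | cons a l ih =>
    by_cases ha : a ∈ F
    · exact ⟨a, head_mem_takeThrough, ha⟩
    · rw [takeThrough_cons_of_notMem ha]
      obtain ⟨c, hc, hcF⟩ := ih (by simpa [ha] using h)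
      exact ⟨c, mem_cons_of_mem a hc, hcF⟩

noncomputable def fromLast (F : Set α) (l : List α) : List α := (takeThrough F l.reverse).reverse

theorem mem_fromLast_of_subset (h : F ⊆ F') (hy : y ∈ fromLast F' l) : y ∈ fromLast F l := by
  rw [fromLast, mem_reverse] at hy ⊢
  exact (takeThrough_prefix_of_subset h _).subset hy

theorem fromLast_suffix (F : Set α) (l : List α) : fromLast F l <:+ l := by
  rw [← reverse_prefix, fromLast, reverse_reverse]
  exact takeThrough_prefix F l.reverse

theorem exists_fromLast_eq (h : ∃ y ∈ l, y ∈ F) :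
    ∃ l₁ c l₂, l = l₁ ++ c :: l₂ ∧ c ∈ F ∧ (∀ y ∈ l₂, y ∉ F) ∧ fromLast F l = c :: l₂ := by
  obtain ⟨c, hc, hcF⟩ := exists_mem_takeThrough (l := l.reverse) (by simpa using h)
  obtain ⟨l₁, l₂, hl, h₁⟩ := exists_eq_append_cons_of_mem_takeThrough hc hcF
  refine ⟨l₂.reverse, c, l₁.reverse, ?_, hcF, by simpa using h₁, ?_⟩
  · simpa using congrArg reverse hl
  · rw [fromLast, hl, takeThrough_append_cons h₁ hcF]
    simp

theorem exists_eq_append_cons_append_cons_of_not_nodup (h : ¬ l.Nodup) :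
    ∃ (l₁ : List α) (x : α) (l₂ l₃ : List α), l = l₁ ++ x :: (l₂ ++ x :: l₃) := by
  induction l with
  | nil => exact absurd nodup_nil h
  | cons a l ih =>
    by_cases ha : a ∈ l
    · obtain ⟨l₂, l₃, rfl⟩ := append_of_mem ha
      exact ⟨[], a, l₂, l₃, rfl⟩
    · obtain ⟨l₁, x, l₂, l₃, rfl⟩ := ih fun hl => h (nodup_cons.mpr ⟨ha, hl⟩)
      exact ⟨a :: l₁, x, l₂, l₃, rfl⟩

theorem IsChain.exists_nodup (hl : l.IsChain R) :
    ∃ m : List α, m.IsChain R ∧ m.Nodup ∧ m.head? = l.head? ∧ m.getLast? = l.getLast? ∧ m ⊆ l := by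
  induction hn : l.length using Nat.strong_induction_on generalizing l with
  | _ n ih =>
  by_cases hnd : l.Nodup
  · exact ⟨l, hl, hnd, rfl, rfl, Subset.refl l⟩
  obtain ⟨l₁, x, l₂, l₃, rfl⟩ := exists_eq_append_cons_append_cons_of_not_nodup hnd
  have hl' : (l₁ ++ x :: l₃).IsChain R := by
    obtain ⟨h₁, h₂⟩ := isChain_split.mp hl
    rw [← cons_append] at h₂
    exact isChain_split.mpr ⟨h₁, (isChain_split.mp h₂).2⟩
  obtain ⟨m, hm, hmd, hmh, hml, hms⟩ := ih _ (by simp [← hn]) hl' rfl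
  refine ⟨m, hm, hmd, ?_, ?_, ?_⟩
  · rw [hmh]; cases l₁ <;> simp
  · rw [hml]
    simp [getLast?_append, getLast?_cons]
  · intro y hy
    have := hms hy
    simp only [mem_append, mem_cons] at this ⊢
    tauto

theorem takeWhile_ne_append_cons [DecidableEq α] (h : x ∉ l₁) :
    (l₁ ++ x :: l₂).takeWhile (· ≠ x) = l₁ := by
  rw [takeWhile_append_of_pos (by intro a ha; simpa using ne_of_mem_of_not_mem ha h)]
  simp

theorem dropWhile_ne_append_cons [DecidableEq α] (h : x ∉ l₁) :
    (l₁ ++ x :: l₂).dropWhile (· ≠ x) = x :: l₂ := by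
  rw [dropWhile_append_of_pos (by intro a ha; simpa using ne_of_mem_of_not_mem ha h)]
  simp

theorem getLast?_zip_tail (a b : α) :
    ∀ l : List α, ((l ++ [a, b]).zip (l ++ [a, b]).tail).getLast? = some (a, b)
  | [] => rfl
  | [_] => rfl
  | c :: d :: l => by
    have h : ((c :: d :: l) ++ [a, b]).zip ((c :: d :: l) ++ [a, b]).tail =
        (c, d) :: ((d :: l) ++ [a, b]).zip ((d :: l) ++ [a, b]).tail := by
      simp [zip_cons_cons]
    rw [h, getLast?_cons, getLast?_zip_tail a b (d :: l)]
    rfl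

end List

namespace Dipath

variable {E : Set (V × V)}

def ofList (l : List V) (hne : l ≠ []) (hE : l.IsChain fun a b => (a, b) ∈ E)
    (hl : l.Nodup) : Dipath E where
  start := l.head hne
  rest := l.tail
  chain := by
    rw [← List.cons_head_tail hne] at hE
    exact hE
  nodup := by rwa [List.cons_head_tail hne]

@[simp] theorem verts_ofList {l : List V} (hne : l ≠ []) (hE : l.IsChain fun a b => (a, b) ∈ E)
    (hl : l.Nodup) : (ofList l hne hE hl).verts = l :=
  List.cons_head_tail hne

theorem mem_support {p : Dipath E} {y : V} : y ∈ p.support ↔ y ∈ p.verts := Iff.rfl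

theorem verts_injective : Function.Injective (verts : Dipath E → List V) := by
  rintro ⟨s, t, _, _⟩ ⟨s', t', _, _⟩ h
  obtain ⟨rfl, rfl⟩ := List.cons_eq_cons.mp h
  rfl

theorem isChain_verts (p : Dipath E) : p.verts.IsChain fun a b => (a, b) ∈ E := p.chain

theorem nodup_verts (p : Dipath E) : p.verts.Nodup := p.nodup

theorem head?_verts (p : Dipath E) : p.verts.head? = some p.start := rfl

theorem getLast?_verts (p : Dipath E) : p.verts.getLast? = some p.last :=
  List.getLast?_eq_some_getLast _

theorem lastEdge?_eq {p : Dipath E} {l : List V} {a b : V} (h : p.verts = l ++ [a, b]) :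
    p.lastEdge? = some (a, b) := by
  rw [lastEdge?, edges, show p.rest = p.verts.tail from rfl, h]
  exact List.getLast?_zip_tail a b l

theorem exists_of_isChain {l : List V} (hl : l.IsChain fun a b => (a, b) ∈ E) (hne : l ≠ []) :
    ∃ d : Dipath E, d.verts.head? = l.head? ∧ d.verts.getLast? = l.getLast? ∧
      ∀ y ∈ d.support, y ∈ l := by
  obtain ⟨m, hm, hmd, hmh, hml, hms⟩ := hl.exists_nodup
  have hmne : m ≠ [] := by
    rintro rfl
    exact hne (List.head?_eq_none_iff.mp hmh.symm)
  exact ⟨ofList m hmne hm hmd, by simpa using hmh, by simpa using hml,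
    fun y hy => hms (by simpa [support] using hy)⟩

noncomputable def afterSep (S : Set V) (p : Dipath E) : List V :=
  (List.fromLast S p.verts).dropLast

theorem exists_verts_eq_afterSep {S : Set V} {v : V} {p : Dipath E} (hv : v ∉ S)
    (hp : p.last = v) (hpS : (p.support ∩ S).Nonempty) :
    ∃ pre s g, p.verts = pre ++ s :: (g ++ [v]) ∧ p.afterSep S = s :: g ∧ s ∈ S ∧
      ∀ y ∈ g, y ∉ S := by
  obtain ⟨y, hy, hyS⟩ := hpS
  obtain ⟨pre, s, l, hpl, hs, hl, hfrom⟩ := List.exists_fromLast_eq ⟨y, hy, hyS⟩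
  have hlast := p.getLast?_verts
  rw [hp, hpl] at hlast
  rcases l.eq_nil_or_concat with rfl | ⟨g, w, rfl⟩
  · simp only [List.getLast?_append, List.getLast?_singleton, Option.some_or,
      Option.some.injEq] at hlast
    exact absurd (hlast ▸ hs) hv
  · rw [List.concat_eq_append] at hpl hl hfrom hlast
    rw [← List.cons_append, ← List.append_assoc, List.getLast?_concat, Option.some.injEq] at hlast
    subst hlast
    refine ⟨pre, s, g, hpl, ?_, hs, fun z hz => hl z (by simp [hz])⟩
    rw [afterSep, hfrom, ← List.cons_append, List.dropLast_concat]

end Dipath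

theorem IsRVSystem.eq_of_mem_verts {E : Set (V × V)} {r v : V} {A : Set (Dipath E)}
    (hA : IsRVSystem E r v A) {d d' : Dipath E} (hd : d ∈ A) (hd' : d' ∈ A) {y : V}
    (hy : y ∈ d.verts) (hy' : y ∈ d'.verts) (hyr : y ≠ r) (hyv : y ≠ v) : d = d' := by
  by_contra hne
  rcases hA.2 hd hd' hne ⟨hy, hy'⟩ with h | h
  exacts [hyr h, hyv h]

namespace IsSeparation

variable {E : Set (V × V)} {r v : V} {S : Set V}

theorem exists_mem_of_isChain (hS : IsSeparation E r v S) {l : List V}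
    (hl : l.IsChain fun a b => (a, b) ∈ E) (hr : l.head? = some r) (hv : l.getLast? = some v) :
    ∃ y ∈ l, y ∈ S := by
  obtain ⟨d, hd, hd', hdl⟩ := Dipath.exists_of_isChain hl (by rintro rfl; simp at hr)
  obtain ⟨y, hy, hyS⟩ := hS.2.2 d (Option.some_injective _ (d.head?_verts.symm.trans (hd.trans hr)))
    (Option.some_injective _ (d.getLast?_verts.symm.trans (hd'.trans hv)))
  exact ⟨y, hdl y hy, hyS⟩

/-- An `S`-free walk from `r` to `y` and an `S`-free walk from `y` to `v` cannot both exist. -/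
theorem false_of_append (hS : IsSeparation E r v S) {q p : Dipath E} {X X' Y Y' : List V}
    {y : V} (hq : q.start = r) (hp : p.last = v) (hqy : q.verts = X ++ y :: X')
    (hpy : p.verts = Y' ++ y :: Y) (hX : ∀ z ∈ X, z ∉ S) (hy : y ∉ S) (hY : ∀ z ∈ Y, z ∉ S) :
    False := by
  have hq' := q.isChain_verts
  have hp' := p.isChain_verts
  rw [hqy] at hq'
  rw [hpy] at hp'
  have hr := q.head?_verts
  have hv := p.getLast?_verts
  rw [hqy, hq] at hr
  rw [hpy, hp] at hv
  obtain ⟨z, hz, hzS⟩ := hS.exists_mem_of_isChain (l := X ++ y :: Y)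
    (List.isChain_split.mpr ⟨(List.isChain_split.mp hq').1, (List.isChain_split.mp hp').2⟩)
    (by cases X <;> simpa using hr) (by simpa using hv)
  simp only [List.mem_append, List.mem_cons] at hz
  rcases hz with hz | rfl | hz
  exacts [hX z hz hzS, hy hzS, hY z hz hzS]

theorem exists_verts_eq_afterSep (hS : IsSeparation E r v S) {d : Dipath E} (hr : d.start = r)
    (hv : d.last = v) :
    ∃ pre s g, d.verts = pre ++ s :: (g ++ [v]) ∧ d.afterSep S = s :: g ∧ s ∈ S ∧
      ∀ y ∈ g, y ∉ S :=
  d.exists_verts_eq_afterSep hS.2.1 hv (hS.2.2 d hr hv)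

theorem mem_afterSep (hS : IsSeparation E r v S) {d : Dipath E} (hr : d.start = r)
    (hv : d.last = v) {y : V} (hy : y ∈ d.afterSep S) : y ∈ d.verts ∧ y ≠ r ∧ y ≠ v := by
  obtain ⟨pre, s, g, hd, hdS, hs, -⟩ := hS.exists_verts_eq_afterSep hr hv
  have hnd := d.nodup_verts
  rw [hdS] at hy
  have hy' : y ∈ s :: (g ++ [v]) :=
    (List.cons_sublist_cons.mpr (List.sublist_append_left g [v])).subset hy
  refine ⟨by rw [hd]; exact List.mem_append_right pre hy', ?_, ?_⟩
  · rintro rfl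
    have hstart := d.head?_verts
    rw [hr, hd] at hstart
    rw [hd] at hnd
    cases pre with
    | nil => exact hS.1 (Option.some_injective _ hstart ▸ hs)
    | cons a pre =>
      obtain rfl : a = y := Option.some_injective _ hstart
      exact (List.nodup_cons.mp hnd).1 (List.mem_append_right pre hy')
  · rintro rfl
    rw [hd, ← List.cons_append, ← List.append_assoc] at hnd
    exact List.disjoint_of_nodup_append hnd (by simp [hy]) (List.mem_singleton_self y)

theorem eq_of_mem_afterSep (hS : IsSeparation E r v S) {A : Set (Dipath E)}
    (hA : IsRVSystem E r v A) {d d' : Dipath E} (hd : d ∈ A) (hd' : d' ∈ A) {y : V}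
    (hy : y ∈ d.afterSep S) (hy' : y ∈ d'.afterSep S) : d = d' :=
  let h := hS.mem_afterSep (hA.1 d hd).1 (hA.1 d hd).2 hy
  hA.eq_of_mem_verts hd hd' h.1 (hS.mem_afterSep (hA.1 d' hd').1 (hA.1 d' hd').2 hy').1 h.2.1 h.2.2

theorem notMem_afterSep (hS : IsSeparation E r v S) {q p : Dipath E} {X X' : List V} {y : V}
    (hq : q.start = r) (hqy : q.verts = X ++ y :: X') (hX : ∀ z ∈ X, z ∉ S) (hy : y ∉ S)
    (hp : p.start = r) (hp' : p.last = v) : y ∉ p.afterSep S := by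
  intro hyp
  obtain ⟨pre, s, g, hpv, hps, hs, hg⟩ := hS.exists_verts_eq_afterSep hp hp'
  rw [hps, List.mem_cons] at hyp
  rcases hyp with rfl | hyg
  · exact hy hs
  obtain ⟨g₁, g₂, rfl⟩ := List.append_of_mem hyg
  refine hS.false_of_append hq hp' hqy (Y' := pre ++ s :: g₁) (Y := g₂ ++ [v])
    (by rw [hpv]; simp) hX hy ?_
  intro z hz
  rcases List.mem_append.mp hz with hz | hz
  · exact hg z (by simp [hz])
  · rw [List.mem_singleton.mp hz]; exact hS.2.1

end IsSeparation

structure RerouteSetup (E : Set (V × V)) (r v : V) (S : Set V) (Q P : Set (Dipath E)) :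
    Prop where
  sep : IsSeparation E r v S
  sysQ : IsRVSystem E r v Q
  orth : Orthogonal Q S
  sysP : IsRVSystem E r v P

namespace Reroute

open List

variable {E : Set (V × V)} (S : Set V) (Q P : Set (Dipath E))

noncomputable def pTails (Z : Set V) : Set V := ⋃ p ∈ P, {y | y ∈ fromLast Z (p.afterSep S)}

theorem pTails_antitone : Antitone (pTails S P) := by
  intro Z Z' h y hy
  simp only [pTails, Set.mem_iUnion₂, Set.mem_ofPred_eq, exists_prop] at hy ⊢
  obtain ⟨p, hp, hy⟩ := hy
  exact ⟨p, hp, mem_fromLast_of_subset h hy⟩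

noncomputable def qStep : Set V →o Set V where
  toFun Z := ⋃ q ∈ Q, {y | y ∈ (q.afterSep S).takeThrough (pTails S P Z)}
  monotone' Z Z' h y hy := by
    simp only [Set.mem_iUnion₂, Set.mem_ofPred_eq, exists_prop] at hy ⊢
    obtain ⟨q, hq, hy⟩ := hy
    exact ⟨q, hq, (takeThrough_prefix_of_subset (pTails_antitone S P h) _).subset hy⟩

theorem qStep_apply (Z : Set V) :
    qStep S Q P Z = ⋃ q ∈ Q, {y | y ∈ (q.afterSep S).takeThrough (pTails S P Z)} :=
  rfl

noncomputable def reach : Set V := OrderHom.lfp (qStep S Q P)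

noncomputable def tails : Set V := pTails S P (reach S Q P)

-- For `p ∈ P` the fallback values `p.start` and `p` below are never used.
noncomputable def switch (p : Dipath E) : V := (fromLast (reach S Q P) (p.afterSep S)).headD p.start

open Classical in
noncomputable def feeder (p : Dipath E) : Dipath E :=
  if h : ∃ q ∈ Q, switch S Q P p ∈ (q.afterSep S).takeThrough (tails S Q P) then h.choose else p

open Classical in
noncomputable def reroutedVerts (p : Dipath E) : List V :=
  (feeder S Q P p).verts.takeWhile (· ≠ switch S Q P p) ++ p.verts.dropWhile (· ≠ switch S Q P p)

noncomputable def rerouted : Set (Dipath E) :=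
  {d | ∃ p ∈ P, d.verts = reroutedVerts S Q P p} ∪ {q ∈ Q | ∀ y ∈ q.verts, y ∉ tails S Q P}

variable {S Q P}

theorem mem_reach_iff {y : V} :
    y ∈ reach S Q P ↔ ∃ q ∈ Q, y ∈ (q.afterSep S).takeThrough (tails S Q P) := by
  have h : qStep S Q P (reach S Q P) = reach S Q P := OrderHom.map_lfp _
  rw [← h]
  simp only [qStep_apply, Set.mem_iUnion₂, Set.mem_ofPred_eq, exists_prop, tails]

theorem mem_tails_iff {y : V} :
    y ∈ tails S Q P ↔ ∃ p ∈ P, y ∈ fromLast (reach S Q P) (p.afterSep S) := by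
  simp only [tails, pTails, Set.mem_iUnion₂, Set.mem_ofPred_eq, exists_prop]

end Reroute

namespace RerouteSetup

open List Reroute

variable {E : Set (V × V)} {r v : V} {S : Set V} {Q P : Set (Dipath E)} {p q d d' : Dipath E}

theorem exists_verts_eq_of_mem_Q (H : RerouteSetup E r v S Q P) (hq : q ∈ Q) :
    ∃ pre s g, q.verts = pre ++ s :: (g ++ [v]) ∧ q.afterSep S = s :: g ∧ s ∈ S ∧
      (∀ y ∈ pre, y ∉ S) ∧ ∀ y ∈ g, y ∉ S := by
  obtain ⟨pre, s, g, hqv, hqS, hs, hg⟩ :=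
    H.sep.exists_verts_eq_afterSep (H.sysQ.1 q hq).1 (H.sysQ.1 q hq).2
  refine ⟨pre, s, g, hqv, hqS, hs, fun y hy hyS => ?_, hg⟩
  obtain ⟨x, -, hx⟩ := H.orth.1 q hq
  have hys : y = s := (hx y ⟨by rw [Dipath.mem_support, hqv]; simp [hy], hyS⟩).trans
    (hx s ⟨by rw [Dipath.mem_support, hqv]; simp, hs⟩).symm
  have hnd := q.nodup_verts
  rw [hqv] at hnd
  exact disjoint_of_nodup_append hnd hy (hys ▸ mem_cons_self)

theorem subset_reach (H : RerouteSetup E r v S Q P) : S ⊆ reach S Q P := by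
  intro x hx
  obtain ⟨q, hq, hxq⟩ := H.orth.2 x hx
  obtain ⟨pre, s, g, hqv, hqS, hs, -, -⟩ := H.exists_verts_eq_of_mem_Q hq
  obtain ⟨y, -, hy⟩ := H.orth.1 q hq
  have hxs : x = s := (hy x ⟨hxq, hx⟩).trans
    (hy s ⟨by rw [Dipath.mem_support, hqv]; simp, hs⟩).symm
  exact mem_reach_iff.mpr ⟨q, hq, by rw [hqS, hxs]; exact head_mem_takeThrough⟩

theorem exists_afterSep_eq_switch (H : RerouteSetup E r v S Q P) (hp : p ∈ P) :
    ∃ m₁ m₂, p.afterSep S = m₁ ++ switch S Q P p :: m₂ ∧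
      fromLast (reach S Q P) (p.afterSep S) = switch S Q P p :: m₂ ∧
      switch S Q P p ∈ reach S Q P ∧ ∀ y ∈ m₂, y ∉ reach S Q P := by
  obtain ⟨-, s, g, -, hpS, hs, -⟩ :=
    H.sep.exists_verts_eq_afterSep (H.sysP.1 p hp).1 (H.sysP.1 p hp).2
  obtain ⟨m₁, x, m₂, hm, hx, hm₂, hfrom⟩ :=
    exists_fromLast_eq (l := p.afterSep S) ⟨s, by rw [hpS]; exact mem_cons_self, H.subset_reach hs⟩
  have hsw : switch S Q P p = x := by rw [switch, hfrom]; rfl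
  exact ⟨m₁, m₂, hsw ▸ hm, hsw ▸ hfrom, hsw ▸ hx, hm₂⟩

theorem switch_mem_reach (H : RerouteSetup E r v S Q P) (hp : p ∈ P) :
    switch S Q P p ∈ reach S Q P :=
  (H.exists_afterSep_eq_switch hp).choose_spec.choose_spec.2.2.1

theorem switch_mem_afterSep (H : RerouteSetup E r v S Q P) (hp : p ∈ P) :
    switch S Q P p ∈ p.afterSep S := by
  obtain ⟨m₁, m₂, hm, -⟩ := H.exists_afterSep_eq_switch hp
  rw [hm]
  exact mem_append_right m₁ mem_cons_self

theorem switch_mem_tails (H : RerouteSetup E r v S Q P) (hp : p ∈ P) :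
    switch S Q P p ∈ tails S Q P := by
  obtain ⟨m₁, m₂, -, hfrom, -⟩ := H.exists_afterSep_eq_switch hp
  exact mem_tails_iff.mpr ⟨p, hp, by rw [hfrom]; exact mem_cons_self⟩

theorem exists_of_mem_tails (H : RerouteSetup E r v S Q P) {y : V} (hy : y ∈ tails S Q P) :
    ∃ p ∈ P, y ∈ p.afterSep S ∧ (y ∈ reach S Q P → y = switch S Q P p) := by
  obtain ⟨p, hp, hy⟩ := mem_tails_iff.mp hy
  refine ⟨p, hp, (fromLast_suffix _ _).subset hy, fun hyZ => ?_⟩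
  obtain ⟨m₁, m₂, -, hfrom, -, hm₂⟩ := H.exists_afterSep_eq_switch hp
  rw [hfrom, mem_cons] at hy
  exact hy.resolve_right fun h => hm₂ y h hyZ

/-- Otherwise `r` would reach `v` along an `S`-free walk. -/
theorem notMem_tails (H : RerouteSetup E r v S Q P) (hq : q ∈ Q) {y : V} (hy : y ∈ q.verts)
    (hy' : y ∉ q.afterSep S) : y ∉ tails S Q P := by
  intro hyT
  obtain ⟨p, hp, hyp, -⟩ := H.exists_of_mem_tails hyT
  obtain ⟨pre, s, g, hqv, hqS, -, hpre, -⟩ := H.exists_verts_eq_of_mem_Q hq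
  rw [hqS] at hy'
  rw [hqv] at hy
  rcases mem_append.mp hy with hy | hy
  · obtain ⟨X, X', rfl⟩ := append_of_mem hy
    refine H.sep.notMem_afterSep (H.sysQ.1 q hq).1 (hqv.trans (append_assoc _ _ _))
      (fun z hz => hpre z (by simp [hz])) (hpre y (by simp)) (H.sysP.1 p hp).1
      (H.sysP.1 p hp).2 hyp
  · have hyv : y = v := by
      simp only [mem_cons, mem_append, not_or] at hy hy'
      tauto
    exact (H.sep.mem_afterSep (H.sysP.1 p hp).1 (H.sysP.1 p hp).2 hyp).2.2 hyv

theorem feeder_spec (H : RerouteSetup E r v S Q P) (hp : p ∈ P) :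
    feeder S Q P p ∈ Q ∧
      switch S Q P p ∈ ((feeder S Q P p).afterSep S).takeThrough (tails S Q P) := by
  have h := mem_reach_iff.mp (H.switch_mem_reach hp)
  rw [feeder, dif_pos h]
  exact h.choose_spec

theorem eq_of_switch_eq (H : RerouteSetup E r v S Q P) {p' : Dipath E} (hp : p ∈ P)
    (hp' : p' ∈ P) (h : switch S Q P p = switch S Q P p') : p = p' :=
  H.sep.eq_of_mem_afterSep H.sysP hp hp' (H.switch_mem_afterSep hp)
    (h ▸ H.switch_mem_afterSep hp')

theorem eq_of_feeder_eq (H : RerouteSetup E r v S Q P) {p' : Dipath E} (hp : p ∈ P)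
    (hp' : p' ∈ P) (h : feeder S Q P p = feeder S Q P p') : p = p' := by
  refine H.eq_of_switch_eq hp hp' (eq_of_mem_takeThrough (H.feeder_spec hp).2
    (H.switch_mem_tails hp) ?_ (H.switch_mem_tails hp'))
  rw [h]
  exact (H.feeder_spec hp').2

theorem eq_feeder (H : RerouteSetup E r v S Q P) (hp : p ∈ P) (hq : q ∈ Q)
    (h : switch S Q P p ∈ q.afterSep S) : q = feeder S Q P p :=
  H.sep.eq_of_mem_afterSep H.sysQ hq (H.feeder_spec hp).1 h
    (mem_of_mem_takeThrough (H.feeder_spec hp).2)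

theorem exists_verts_eq_switch (H : RerouteSetup E r v S Q P) (hp : p ∈ P) :
    ∃ C m, p.verts = C ++ switch S Q P p :: (m ++ [v]) ∧
      ∀ y ∈ m, y ∈ p.afterSep S ∧ y ∈ tails S Q P ∧ y ∉ reach S Q P := by
  obtain ⟨pre, s, g, hpv, hpS, -, -⟩ :=
    H.sep.exists_verts_eq_afterSep (H.sysP.1 p hp).1 (H.sysP.1 p hp).2
  obtain ⟨m₁, m₂, hm, hfrom, -, hm₂⟩ := H.exists_afterSep_eq_switch hp
  refine ⟨pre ++ m₁, m₂, ?_, fun y hy => ⟨?_, ?_, hm₂ y hy⟩⟩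
  · rw [hpv, ← cons_append, ← hpS, hm]
    simp
  · rw [hm]
    simp [hy]
  · exact mem_tails_iff.mpr ⟨p, hp, by rw [hfrom]; exact mem_cons_of_mem _ hy⟩

theorem exists_feeder_verts_eq (H : RerouteSetup E r v S Q P) (hp : p ∈ P) :
    ∃ A B, (feeder S Q P p).verts = A ++ switch S Q P p :: (B ++ [v]) ∧
      ∀ y ∈ A, y ∉ tails S Q P := by
  obtain ⟨hq, hx⟩ := H.feeder_spec hp
  obtain ⟨pre, s, g, hqv, hqS, -, -, -⟩ := H.exists_verts_eq_of_mem_Q hq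
  obtain ⟨n₁, n₂, hn, hn₁⟩ := exists_eq_append_cons_of_mem_takeThrough hx (H.switch_mem_tails hp)
  refine ⟨pre ++ n₁, n₂, ?_, fun y hy => ?_⟩
  · rw [hqv, ← cons_append, ← hqS, hn]
    simp
  rcases mem_append.mp hy with hy | hy
  · have hnd := (feeder S Q P p).nodup_verts
    rw [hqv] at hnd
    refine H.notMem_tails hq (by rw [hqv]; exact mem_append_left _ hy) fun hy' => ?_
    rw [hqS] at hy'
    exact disjoint_of_nodup_append hnd hy
      ((cons_sublist_cons.mpr (sublist_append_left g [v])).subset hy')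
  · exact hn₁ y hy

theorem reroutedVerts_eq (H : RerouteSetup E r v S Q P) (hp : p ∈ P) :
    ∃ A B C m, (feeder S Q P p).verts = A ++ switch S Q P p :: (B ++ [v]) ∧
      p.verts = C ++ switch S Q P p :: (m ++ [v]) ∧
      reroutedVerts S Q P p = A ++ switch S Q P p :: (m ++ [v]) ∧
      (∀ y ∈ A, y ∉ tails S Q P) ∧
      ∀ y ∈ m, y ∈ p.afterSep S ∧ y ∈ tails S Q P ∧ y ∉ reach S Q P := by
  classical
  obtain ⟨A, B, hq, hA⟩ := H.exists_feeder_verts_eq hp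
  obtain ⟨C, m, hpv, hm⟩ := H.exists_verts_eq_switch hp
  refine ⟨A, B, C, m, hq, hpv, ?_, hA, hm⟩
  have hqnd := (feeder S Q P p).nodup_verts
  have hpnd := p.nodup_verts
  rw [hq] at hqnd
  rw [hpv] at hpnd
  rw [reroutedVerts, hq, hpv,
    takeWhile_ne_append_cons (disjoint_of_nodup_append hqnd · mem_cons_self),
    dropWhile_ne_append_cons (disjoint_of_nodup_append hpnd · mem_cons_self)]

theorem mem_reroutedVerts (H : RerouteSetup E r v S Q P) (hp : p ∈ P) {y : V}
    (hy : y ∈ reroutedVerts S Q P p) (hyv : y ≠ v) :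
    (y ∈ (feeder S Q P p).verts ∧ (y ∈ tails S Q P → y ∈ reach S Q P)) ∨
      (y ∈ p.afterSep S ∧ y ∈ tails S Q P ∧ y ∉ reach S Q P) := by
  obtain ⟨A, B, C, m, hq, -, hR, hA, hm⟩ := H.reroutedVerts_eq hp
  rw [hR, mem_append, mem_cons, mem_append, mem_singleton] at hy
  rcases hy with hy | rfl | hy | rfl
  · exact Or.inl ⟨by rw [hq]; exact mem_append_left _ hy, fun h => absurd h (hA y hy)⟩
  · exact Or.inl ⟨by rw [hq]; simp, fun _ => H.switch_mem_reach hp⟩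
  · exact Or.inr (hm y hy)
  · exact absurd rfl hyv

theorem mem_feeder_of_mem_reroutedVerts (H : RerouteSetup E r v S Q P) (hp : p ∈ P) {y : V}
    (hy : y ∈ reroutedVerts S Q P p) (hyS : y ∈ S) : y ∈ (feeder S Q P p).verts := by
  rcases H.mem_reroutedVerts hp hy fun h => H.sep.2.1 (h ▸ hyS) with h | h
  · exact h.1
  · exact absurd (H.subset_reach hyS) h.2.2

theorem exists_verts_eq_reroutedVerts (H : RerouteSetup E r v S Q P) (hp : p ∈ P) :
    ∃ d : Dipath E, d.verts = reroutedVerts S Q P p := by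
  obtain ⟨A, B, C, m, hq, hpv, hR, hA, hm⟩ := H.reroutedVerts_eq hp
  have hqc := (feeder S Q P p).isChain_verts
  have hpc := p.isChain_verts
  have hqnd := (feeder S Q P p).nodup_verts
  have hpnd := p.nodup_verts
  rw [hq] at hqc hqnd
  rw [hpv] at hpc hpnd
  have hdisj : ∀ y ∈ A, y ∉ switch S Q P p :: (m ++ [v]) := by
    intro y hy hy'
    rw [mem_cons, mem_append, mem_singleton] at hy'
    rcases hy' with rfl | hy' | rfl
    · exact disjoint_of_nodup_append hqnd hy mem_cons_self
    · exact hA y hy (hm y hy').2.1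
    · exact disjoint_of_nodup_append hqnd hy (by simp)
  refine ⟨Dipath.ofList (A ++ switch S Q P p :: (m ++ [v])) (by simp)
    (isChain_split.mpr ⟨(isChain_split.mp hqc).1, (isChain_split.mp hpc).2⟩)
    (nodup_append.mpr ⟨(nodup_append.mp hqnd).1, (nodup_append.mp hpnd).2.1, ?_⟩), ?_⟩
  · intro a ha b hb hab
    exact hdisj a ha (hab ▸ hb)
  · rw [Dipath.verts_ofList, hR]

theorem start_last_of_verts_eq (H : RerouteSetup E r v S Q P) (hp : p ∈ P)
    (hd : d.verts = reroutedVerts S Q P p) : d.start = r ∧ d.last = v := by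
  obtain ⟨A, B, C, m, hq, -, hR, -⟩ := H.reroutedVerts_eq hp
  have hstart := d.head?_verts
  have hfeed := (feeder S Q P p).head?_verts
  have hlast := d.getLast?_verts
  rw [(H.sysQ.1 _ (H.feeder_spec hp).1).1, hq] at hfeed
  rw [hd, hR] at hstart hlast
  constructor
  · refine Option.some_injective _ (hstart.symm.trans ?_)
    rw [← hfeed]
    cases A <;> rfl
  · refine Option.some_injective _ (hlast.symm.trans ?_)
    rw [← cons_append, ← append_assoc, getLast?_concat]

theorem lastEdge?_eq_of_verts_eq (H : RerouteSetup E r v S Q P) (hp : p ∈ P)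
    (hd : d.verts = reroutedVerts S Q P p) : d.lastEdge? = p.lastEdge? := by
  obtain ⟨A, B, C, m, -, hpv, hR, -⟩ := H.reroutedVerts_eq hp
  obtain ⟨Y, a, hY⟩ : ∃ Y a, switch S Q P p :: m = Y ++ [a] := by
    rcases (switch S Q P p :: m).eq_nil_or_concat with h | ⟨Y, a, h⟩
    · exact absurd h (cons_ne_nil _ _)
    · exact ⟨Y, a, h.trans concat_eq_append⟩
  have hsplit : ∀ L : List V, L ++ switch S Q P p :: (m ++ [v]) = (L ++ Y) ++ [a, v] := by
    intro L
    rw [← cons_append, hY]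
    simp
  rw [d.lastEdge?_eq (hd.trans (hR.trans (hsplit A))), p.lastEdge?_eq (hpv.trans (hsplit C))]

theorem false_of_mem_reroutedVerts_of_untouched (H : RerouteSetup E r v S Q P) (hp : p ∈ P)
    (hq : q ∈ Q) (hclean : ∀ y ∈ q.verts, y ∉ tails S Q P) {y : V}
    (hy : y ∈ reroutedVerts S Q P p) (hy' : y ∈ q.verts) (hyr : y ≠ r) (hyv : y ≠ v) : False := by
  obtain ⟨hqf, hsw⟩ := H.feeder_spec hp
  rcases H.mem_reroutedVerts hp hy hyv with h | h
  · obtain rfl := H.sysQ.eq_of_mem_verts hqf hq h.1 hy' hyr hyv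
    exact hclean _ (H.sep.mem_afterSep (H.sysQ.1 _ hqf).1 (H.sysQ.1 _ hqf).2
      (mem_of_mem_takeThrough hsw)).1 (H.switch_mem_tails hp)
  · exact hclean y hy' h.2.1

theorem eq_of_mem_rerouted (H : RerouteSetup E r v S Q P) (hd : d ∈ rerouted S Q P)
    (hd' : d' ∈ rerouted S Q P) {y : V} (hy : y ∈ d.verts) (hy' : y ∈ d'.verts) (hyr : y ≠ r)
    (hyv : y ≠ v) : d = d' := by
  rcases hd with ⟨p, hp, hdv⟩ | ⟨hq, hclean⟩ <;> rcases hd' with ⟨p', hp', hdv'⟩ | ⟨hq', hclean'⟩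
  · rw [hdv] at hy
    rw [hdv'] at hy'
    suffices p = p' by
      subst this
      exact Dipath.verts_injective (hdv.trans hdv'.symm)
    rcases H.mem_reroutedVerts hp hy hyv with h | h <;>
      rcases H.mem_reroutedVerts hp' hy' hyv with h' | h'
    · exact H.eq_of_feeder_eq hp hp' <| H.sysQ.eq_of_mem_verts (H.feeder_spec hp).1
        (H.feeder_spec hp').1 h.1 h'.1 hyr hyv
    · exact absurd (h.2 h'.2.1) h'.2.2
    · exact absurd (h'.2 h.2.1) h.2.2
    · exact H.sep.eq_of_mem_afterSep H.sysP hp hp' h.1 h'.1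
  · exact (H.false_of_mem_reroutedVerts_of_untouched hp hq' hclean' (hdv ▸ hy) hy' hyr hyv).elim
  · exact (H.false_of_mem_reroutedVerts_of_untouched hp' hq hclean (hdv' ▸ hy') hy hyr hyv).elim
  · exact H.sysQ.eq_of_mem_verts hq hq' hy hy' hyr hyv

theorem isRVSystem_rerouted (H : RerouteSetup E r v S Q P) :
    IsRVSystem E r v (rerouted S Q P) := by
  refine ⟨fun d hd => ?_, fun d hd d' hd' hne y hy => ?_⟩
  · rcases hd with ⟨p, hp, hdv⟩ | ⟨hq, -⟩
    exacts [H.start_last_of_verts_eq hp hdv, H.sysQ.1 d hq]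
  · by_contra h
    simp only [Set.mem_insert_iff, Set.mem_singleton_iff, not_or] at h
    exact hne (H.eq_of_mem_rerouted hd hd' hy.1 hy.2 h.1 h.2)

theorem existsUnique_mem_sep (H : RerouteSetup E r v S Q P) (hp : p ∈ P)
    (hd : d.verts = reroutedVerts S Q P p) : ∃! x, x ∈ d.support ∩ S := by
  obtain ⟨hr, hv⟩ := H.start_last_of_verts_eq hp hd
  obtain ⟨x, hx⟩ := H.sep.2.2 d hr hv
  have hfeed : ∀ y ∈ d.support ∩ S, y ∈ (feeder S Q P p).support ∩ S := fun y hy =>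
    ⟨H.mem_feeder_of_mem_reroutedVerts hp (hd ▸ hy.1) hy.2, hy.2⟩
  exact ⟨x, hx, fun y hy => (H.orth.1 _ (H.feeder_spec hp).1).unique (hfeed y hy) (hfeed x hx)⟩

theorem orthogonal_rerouted (H : RerouteSetup E r v S Q P) :
    Orthogonal (rerouted S Q P) S := by
  refine ⟨fun d hd => ?_, fun x hx => ?_⟩
  · rcases hd with ⟨p, hp, hdv⟩ | ⟨hq, -⟩
    exacts [H.existsUnique_mem_sep hp hdv, H.orth.1 d hq]
  obtain ⟨q, hq, hxq⟩ := H.orth.2 x hx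
  by_cases hclean : ∀ y ∈ q.verts, y ∉ tails S Q P
  · exact ⟨q, Or.inr ⟨hq, hclean⟩, hxq⟩
  push Not at hclean
  obtain ⟨y, hyq, hyT⟩ := hclean
  have hy : y ∈ q.afterSep S := by_contra fun h => H.notMem_tails hq hyq h hyT
  -- the first vertex of `q` after `S` on a tail is the switch vertex of some `p`, fed by `q`
  obtain ⟨c, hc, hcT⟩ := exists_mem_takeThrough ⟨y, hy, hyT⟩
  obtain ⟨p, hp, -, hcp⟩ := H.exists_of_mem_tails hcT
  have hcsw := hcp (mem_reach_iff.mpr ⟨q, hq, hc⟩)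
  have hqp := H.eq_feeder hp hq (hcsw ▸ mem_of_mem_takeThrough hc)
  obtain ⟨d, hdv⟩ := H.exists_verts_eq_reroutedVerts hp
  obtain ⟨z, hz, -⟩ := H.existsUnique_mem_sep hp hdv
  have hzq : z ∈ q.support ∩ S :=
    ⟨hqp ▸ H.mem_feeder_of_mem_reroutedVerts hp (hdv ▸ hz.1) hz.2, hz.2⟩
  refine ⟨d, Or.inl ⟨p, hp, hdv⟩, ?_⟩
  rw [(H.orth.1 q hq).unique ⟨hxq, hx⟩ hzq]
  exact hz.1

theorem termEdges_subset_rerouted (H : RerouteSetup E r v S Q P) :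
    termEdges P ⊆ termEdges (rerouted S Q P) := by
  rintro e ⟨p, hp, he⟩
  obtain ⟨d, hdv⟩ := H.exists_verts_eq_reroutedVerts hp
  exact ⟨d, Or.inl ⟨p, hp, hdv⟩, (H.lastEdge?_eq_of_verts_eq hp hdv).trans he⟩

end RerouteSetup

theorem stmt3_general {V : Type u} (E : Set (V × V)) (r v : V) (I : Set (V × V)) (hI : I ∈ GSet E r v)
    (S : Set V) (hS : IsEMSeparation E r v S) :
    ∃ R : Set (Dipath E), IsRVSystem E r v R ∧ Orthogonal R S ∧ I ⊆ termEdges R := by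
  obtain ⟨P, hP, rfl⟩ := hI
  obtain ⟨hsep, Q, hQ, hQS⟩ := hS
  have H : RerouteSetup E r v S Q P := ⟨hsep, hQ, hQS, hP⟩
  exact ⟨Reroute.rerouted S Q P, H.isRVSystem_rerouted, H.orthogonal_rerouted,
    H.termEdges_subset_rerouted⟩

/-- For any `I ∈ 𝒢_D(v)` and any Erdős–Menger `(r,v)`-separation `S` there is an
`(r,v)`-path-system orthogonal to `S` whose terminal edges include `I`. -/
theorem stmt3 {V : Type u} (E : Set (V × V)) (r v : V) (hv : v ≠ r)
    (hrv : (r, v) ∉ E) (I : Set (V × V)) (hI : I ∈ GSet E r v)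
    (S : Set V) (hS : IsEMSeparation E r v S) :
    ∃ R : Set (Dipath E), IsRVSystem E r v R ∧ Orthogonal R S ∧ I ⊆ termEdges R :=
  stmt3_general E r v I hI S hS
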